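/- arXiv:1606.03730 — 3 statements merged into one kernel-verified Lean document; each statement's English description precedes it below -/
import Mathlib

section
/- Two functions holomorphic on the strip S = {z ∈ ℂ : 0 < Re z < 1} are identical if their difference is bounded on S and they coincide along the sequence α_k = 1/k, k ≥ 2. -/
/-!
Pull `f - g` back to the unit disc along the inverse `toStrip` of the conformal map
`toDisc z = cayley (exp (π i z))`. The result `H` is bounded by `C` and vanishes at the points
`u_k = toDisc (1 / k)`, whose Blaschke sum `∑ (1 - ‖u_k‖²)` diverges because
`1 - ‖toDisc t‖² ≥ 2 t`. Dividing `H` by a Blaschke factor at one of its zeros does not increase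
the bound `C` (maximum principle on the circles `‖z‖ = r`, where the factor has modulus tending
to `1` as `r → 1`), so `‖H w‖ ≤ C ∏ ‖B_{u_k} w‖ ≤ C exp (-(1 - ‖w‖²) / 8 · ∑ (1 - ‖u_k‖²)) → 0`.
-/

open Complex Set Metric Filter Function Finset
open scoped Topology ComplexConjugate Real

noncomputable def blaschkeFactor (u w : ℂ) : ℂ := (w - u) / (1 - conj u * w)

section BlaschkeFactor

variable {u w z : ℂ}

lemma one_sub_ne_zero_of_norm_lt_one (hu : ‖u‖ < 1) : 1 - u ≠ 0 := by
  intro h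
  rw [← sub_eq_zero.mp h, norm_one] at hu
  exact lt_irrefl _ hu

lemma one_sub_conj_mul_ne_zero (hu : ‖u‖ < 1) (hw : ‖w‖ ≤ 1) : 1 - conj u * w ≠ 0 := by
  refine one_sub_ne_zero_of_norm_lt_one ?_
  rw [norm_mul, RCLike.norm_conj]
  exact mul_lt_one_of_nonneg_of_lt_one_left (norm_nonneg u) hu hw

lemma blaschkeFactor_ne_zero (hu : ‖u‖ < 1) (hw : ‖w‖ ≤ 1) (hwu : w ≠ u) :
    blaschkeFactor u w ≠ 0 :=
  div_ne_zero (sub_ne_zero.mpr hwu) (one_sub_conj_mul_ne_zero hu hw)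

lemma norm_sub_sq_eq (u w : ℂ) :
    ‖w - u‖ ^ 2 = ‖1 - conj u * w‖ ^ 2 - (1 - ‖w‖ ^ 2) * (1 - ‖u‖ ^ 2) := by
  simp only [Complex.sq_norm, normSq_apply, sub_re, sub_im, mul_re, mul_im, one_re, one_im,
    conj_re, conj_im]
  ring

lemma one_sub_norm_blaschkeFactor_sq (hu : ‖u‖ < 1) (hw : ‖w‖ ≤ 1) :
    1 - ‖blaschkeFactor u w‖ ^ 2 = (1 - ‖w‖ ^ 2) * (1 - ‖u‖ ^ 2) / ‖1 - conj u * w‖ ^ 2 := by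
  have hne : ‖1 - conj u * w‖ ≠ 0 := norm_ne_zero_iff.mpr (one_sub_conj_mul_ne_zero hu hw)
  rw [blaschkeFactor, norm_div, div_pow, norm_sub_sq_eq]
  field_simp
  ring

lemma norm_blaschkeFactor_le_exp (hu : ‖u‖ < 1) (hw : ‖w‖ ≤ 1) :
    ‖blaschkeFactor u w‖ ≤ Real.exp (-((1 - ‖w‖ ^ 2) * (1 - ‖u‖ ^ 2) / 8)) := by
  set D := (1 - ‖w‖ ^ 2) * (1 - ‖u‖ ^ 2)
  have hD : 0 ≤ D := mul_nonneg (by nlinarith [norm_nonneg w]) (by nlinarith [norm_nonneg u])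
  have hpos : 0 < ‖1 - conj u * w‖ := norm_pos_iff.mpr (one_sub_conj_mul_ne_zero hu hw)
  have hle : ‖1 - conj u * w‖ ≤ 2 :=
    calc ‖1 - conj u * w‖ ≤ ‖(1 : ℂ)‖ + ‖conj u * w‖ := norm_sub_le _ _
      _ ≤ 2 := by
        rw [norm_one, norm_mul, RCLike.norm_conj]
        nlinarith [norm_nonneg u, norm_nonneg w]
  have hsq : ‖blaschkeFactor u w‖ ^ 2 ≤ Real.exp (-(D / 8)) ^ 2 :=
    calc ‖blaschkeFactor u w‖ ^ 2 = 1 - D / ‖1 - conj u * w‖ ^ 2 := by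
          rw [← one_sub_norm_blaschkeFactor_sq hu hw]; ring
      _ ≤ 1 - D / 2 ^ 2 := by gcongr
      _ ≤ Real.exp (-(D / 2 ^ 2)) := by linarith [Real.add_one_le_exp (-(D / 2 ^ 2))]
      _ = Real.exp (-(D / 8)) ^ 2 := by rw [← Real.exp_nat_mul]; ring_nf
  exact (pow_le_pow_iff_left₀ (norm_nonneg _) (Real.exp_pos _).le two_ne_zero).mp hsq

lemma div_le_norm_blaschkeFactor {r : ℝ} (hur : ‖u‖ < r) (hz : ‖z‖ = r) (hr : r ≤ 1) :
    (r - ‖u‖) / (1 - ‖u‖ * r) ≤ ‖blaschkeFactor u z‖ := by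
  have hu : ‖u‖ < 1 := hur.trans_le hr
  have hq : 0 < 1 - ‖u‖ * r := by nlinarith [norm_nonneg u]
  have hq_le : 1 - ‖u‖ * r ≤ ‖1 - conj u * z‖ := by
    calc 1 - ‖u‖ * r = ‖(1 : ℂ)‖ - ‖conj u * z‖ := by
          rw [norm_one, norm_mul, RCLike.norm_conj, hz]
      _ ≤ ‖1 - conj u * z‖ := norm_sub_norm_le _ _
  have hsq : ((r - ‖u‖) / (1 - ‖u‖ * r)) ^ 2 ≤ ‖blaschkeFactor u z‖ ^ 2 := by
    have hfactor : 1 - ((r - ‖u‖) / (1 - ‖u‖ * r)) ^ 2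
        = (1 - r ^ 2) * (1 - ‖u‖ ^ 2) / (1 - ‖u‖ * r) ^ 2 := by
      rw [div_pow, one_sub_div (pow_ne_zero 2 hq.ne')]
      ring
    have hD : 0 ≤ (1 - r ^ 2) * (1 - ‖u‖ ^ 2) :=
      mul_nonneg (by nlinarith [norm_nonneg u]) (by nlinarith [norm_nonneg u])
    have := one_sub_norm_blaschkeFactor_sq hu (hz.le.trans hr)
    rw [hz] at this
    have : (1 - r ^ 2) * (1 - ‖u‖ ^ 2) / ‖1 - conj u * z‖ ^ 2
        ≤ (1 - r ^ 2) * (1 - ‖u‖ ^ 2) / (1 - ‖u‖ * r) ^ 2 := by gcongr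
    linarith
  exact (pow_le_pow_iff_left₀ (div_nonneg (by linarith) hq.le) (norm_nonneg _)
    two_ne_zero).mp hsq

end BlaschkeFactor

section UnitDisc

variable {H : ℂ → ℂ} {C : ℝ}

lemma norm_le_of_eventually_forall_sphere_norm_le {G : ℂ → ℂ}
    (hG : DifferentiableOn ℂ G (ball 0 1)) {M : ℝ → ℝ} {L : ℝ} (hM : Tendsto M (𝓝[<] 1) (𝓝 L))
    (hbound : ∀ᶠ r in 𝓝[<] 1, ∀ z ∈ sphere (0 : ℂ) r, ‖G z‖ ≤ M r) {w : ℂ}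
    (hw : w ∈ ball (0 : ℂ) 1) : ‖G w‖ ≤ L := by
  refine ge_of_tendsto hM ?_
  filter_upwards [hbound, Ioo_mem_nhdsLT (mem_ball_zero_iff.mp hw)] with r hr hwr
  have hr0 : r ≠ 0 := ((norm_nonneg w).trans_lt hwr.1).ne'
  refine norm_le_of_forall_mem_frontier_norm_le isBounded_ball ?_ (by rwa [frontier_ball 0 hr0]) ?_
  · refine DifferentiableOn.diffContOnCl ?_
    rw [closure_ball 0 hr0]
    exact hG.mono (closedBall_subset_ball hwr.2)
  · rw [closure_ball 0 hr0]
    exact mem_closedBall_zero_iff.mpr hwr.1.le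

lemma exists_eq_mul_blaschkeFactor (hd : DifferentiableOn ℂ H (ball 0 1))
    (hb : ∀ w ∈ ball (0 : ℂ) 1, ‖H w‖ ≤ C) {u : ℂ} (hu : u ∈ ball (0 : ℂ) 1) (hHu : H u = 0) :
    ∃ G : ℂ → ℂ, DifferentiableOn ℂ G (ball 0 1) ∧ (∀ w ∈ ball (0 : ℂ) 1, ‖G w‖ ≤ C) ∧
      ∀ w ∈ ball (0 : ℂ) 1, H w = G w * blaschkeFactor u w := by
  have hu1 : ‖u‖ < 1 := mem_ball_zero_iff.mp hu
  set G : ℂ → ℂ := fun w ↦ (1 - conj u * w) * dslope H u w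
  have hGd : DifferentiableOn ℂ G (ball 0 1) := by
    refine DifferentiableOn.mul ?_ ((differentiableOn_dslope (isOpen_ball.mem_nhds hu)).mpr hd)
    fun_prop
  have hfac : ∀ w ∈ ball (0 : ℂ) 1, H w = G w * blaschkeFactor u w := by
    intro w hw
    rcases eq_or_ne w u with rfl | hwu
    · simp [blaschkeFactor, hHu]
    have hden := one_sub_conj_mul_ne_zero hu1 (mem_ball_zero_iff.mp hw).le
    simp only [G, blaschkeFactor, dslope_of_ne _ hwu, slope_def_field, hHu, sub_zero]
    field_simp [sub_ne_zero.mpr hwu]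
  refine ⟨G, hGd, fun w hw ↦ ?_, hfac⟩
  -- on `‖z‖ = r`, `‖G z‖ = ‖H z‖ / ‖blaschkeFactor u z‖ ≤ C (1 - ‖u‖ r) / (r - ‖u‖)`
  refine norm_le_of_eventually_forall_sphere_norm_le hGd
    (M := fun r ↦ C / ((r - ‖u‖) / (1 - ‖u‖ * r))) ?_ ?_ hw
  · have hu1' : 1 - ‖u‖ ≠ 0 := by linarith
    have hcont : ContinuousAt (fun r : ℝ ↦ C / ((r - ‖u‖) / (1 - ‖u‖ * r))) 1 := by
      fun_prop (disch := simp [hu1'])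
    simpa [hu1'] using hcont.tendsto.mono_left nhdsWithin_le_nhds
  · filter_upwards [Ioo_mem_nhdsLT hu1] with r hr z hz
    have hzr : ‖z‖ = r := mem_sphere_zero_iff_norm.mp hz
    have hm : 0 < (r - ‖u‖) / (1 - ‖u‖ * r) :=
      div_pos (by linarith [hr.1]) (by nlinarith [norm_nonneg u, hr.1, hr.2])
    rw [le_div_iff₀ hm]
    calc ‖G z‖ * ((r - ‖u‖) / (1 - ‖u‖ * r)) ≤ ‖G z‖ * ‖blaschkeFactor u z‖ := by
          gcongr
          exact div_le_norm_blaschkeFactor hr.1 hzr hr.2.le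
      _ = ‖H z‖ := by rw [← norm_mul, ← hfac z (mem_ball_zero_iff.mpr (hzr.trans_lt hr.2))]
      _ ≤ C := hb z (mem_ball_zero_iff.mpr (hzr.trans_lt hr.2))

lemma exists_eq_mul_prod_blaschkeFactor (hd : DifferentiableOn ℂ H (ball 0 1))
    (hb : ∀ w ∈ ball (0 : ℂ) 1, ‖H w‖ ≤ C) (s : Finset ℂ) (hs : ↑s ⊆ ball (0 : ℂ) 1)
    (hzero : ∀ a ∈ s, H a = 0) :
    ∃ G : ℂ → ℂ, DifferentiableOn ℂ G (ball 0 1) ∧ (∀ w ∈ ball (0 : ℂ) 1, ‖G w‖ ≤ C) ∧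
      ∀ w ∈ ball (0 : ℂ) 1, H w = G w * ∏ a ∈ s, blaschkeFactor a w := by
  induction s using Finset.induction_on with
  | empty => exact ⟨H, hd, hb, by simp⟩
  | insert a s has ih =>
    obtain ⟨G, hGd, hGb, hfac⟩ := ih ((coe_subset.mpr (subset_insert a s)).trans hs)
      fun b hb ↦ hzero b (mem_insert_of_mem hb)
    have ha : a ∈ ball (0 : ℂ) 1 := hs (mem_insert_self a s)
    have hGa : G a = 0 := by
      have hprod : ∏ b ∈ s, blaschkeFactor b a ≠ 0 := prod_ne_zero_iff.mpr fun b hb ↦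
        blaschkeFactor_ne_zero (mem_ball_zero_iff.mp (hs (mem_insert_of_mem hb)))
          (mem_ball_zero_iff.mp ha).le (ne_of_mem_of_not_mem hb has).symm
      simpa [hprod, hzero a (mem_insert_self a s)] using (hfac a ha).symm
    obtain ⟨G', hG'd, hG'b, hfac'⟩ := exists_eq_mul_blaschkeFactor hGd hGb ha hGa
    exact ⟨G', hG'd, hG'b, fun w hw ↦ by rw [hfac w hw, hfac' w hw, prod_insert has, mul_assoc]⟩

/-- Blaschke's theorem in the unit disc. -/
theorem eqOn_zero_of_not_summable_one_sub_norm_sq (hd : DifferentiableOn ℂ H (ball 0 1))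
    (hb : ∀ w ∈ ball (0 : ℂ) 1, ‖H w‖ ≤ C) {u : ℕ → ℂ} (hu : ∀ k, u k ∈ ball (0 : ℂ) 1)
    (hinj : Injective u) (hzero : ∀ k, H (u k) = 0)
    (hdiv : ¬ Summable fun k ↦ 1 - ‖u k‖ ^ 2) :
    EqOn H 0 (ball 0 1) := by
  intro w hw
  have hw1 : ‖w‖ < 1 := mem_ball_zero_iff.mp hw
  set c := (1 - ‖w‖ ^ 2) / 8
  have hc : 0 < c := div_pos (by nlinarith [norm_nonneg w]) (by norm_num)
  have hC : 0 ≤ C := (norm_nonneg _).trans (hb w hw)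
  set S : ℕ → ℝ := fun n ↦ ∑ k ∈ range n, (1 - ‖u k‖ ^ 2)
  have hbound : ∀ n, ‖H w‖ ≤ C * Real.exp (-(c * S n)) := by
    intro n
    obtain ⟨G, -, hGb, hfac⟩ := exists_eq_mul_prod_blaschkeFactor hd hb ((range n).image u)
      (by simpa [Set.subset_def] using fun k _ ↦ hu k) (by simpa using fun k _ ↦ hzero k)
    rw [hfac w hw, prod_image hinj.injOn, norm_mul, norm_prod]
    calc ‖G w‖ * ∏ k ∈ range n, ‖blaschkeFactor (u k) w‖
        ≤ C * ∏ k ∈ range n, Real.exp (-(c * (1 - ‖u k‖ ^ 2))) := by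
          gcongr with k
          · exact hGb w hw
          · exact (norm_blaschkeFactor_le_exp (mem_ball_zero_iff.mp (hu k)) hw1.le).trans_eq
              (by congr 1; ring)
      _ = C * Real.exp (-(c * S n)) := by rw [← Real.exp_sum, sum_neg_distrib, ← mul_sum]
  have hS : Tendsto S atTop atTop := (not_summable_iff_tendsto_nat_atTop_of_nonneg fun k ↦
    sub_nonneg.mpr (pow_le_one₀ (norm_nonneg _) (mem_ball_zero_iff.mp (hu k)).le)).mp hdiv
  have hlim : Tendsto (fun n ↦ C * Real.exp (-(c * S n))) atTop (𝓝 0) := by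
    simpa using ((Real.tendsto_exp_atBot.comp
      (tendsto_neg_atTop_atBot.comp (hS.const_mul_atTop hc))).const_mul C)
  exact norm_le_zero_iff.mp (ge_of_tendsto' hlim hbound)

end UnitDisc

section Cayley

noncomputable def cayley (ζ : ℂ) : ℂ := (ζ - I) / (ζ + I)

noncomputable def cayleyInv (u : ℂ) : ℂ := I * (1 + u) / (1 - u)

variable {ζ u : ℂ}

lemma add_I_ne_zero_of_im_nonneg (hζ : 0 ≤ ζ.im) : ζ + I ≠ 0 := by
  intro h
  have := congrArg im h
  simp only [add_im, I_im, zero_im] at this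
  linarith

lemma one_sub_norm_cayley_sq (hζ : ζ + I ≠ 0) :
    1 - ‖cayley ζ‖ ^ 2 = 4 * ζ.im / ‖ζ + I‖ ^ 2 := by
  rw [cayley, norm_div, div_pow, one_sub_div (pow_ne_zero 2 (norm_ne_zero_iff.mpr hζ))]
  congr 1
  simp only [Complex.sq_norm, normSq_apply, sub_re, sub_im, add_re, add_im, I_re, I_im]
  ring

lemma norm_cayley_lt_one (hζ : 0 < ζ.im) : ‖cayley ζ‖ < 1 := by
  have hne := add_I_ne_zero_of_im_nonneg hζ.le
  have h := one_sub_norm_cayley_sq hne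
  have : 0 < 4 * ζ.im / ‖ζ + I‖ ^ 2 := by
    have := norm_pos_iff.mpr hne
    positivity
  exact (sq_lt_one_iff₀ (norm_nonneg _)).mp (by linarith)

lemma cayleyInv_cayley (hζ : ζ + I ≠ 0) : cayleyInv (cayley ζ) = ζ := by
  have h : 1 - cayley ζ = 2 * I / (ζ + I) := by
    rw [cayley]
    field_simp
    ring
  have hne : 1 - cayley ζ ≠ 0 := by
    rw [h]
    exact div_ne_zero (mul_ne_zero two_ne_zero I_ne_zero) hζ
  rw [cayleyInv, div_eq_iff hne, h, cayley]
  field_simp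
  ring

lemma im_cayleyInv_pos (hu : ‖u‖ < 1) : 0 < (cayleyInv u).im := by
  have hnsq : 0 < normSq (1 - u) := normSq_pos.mpr (one_sub_ne_zero_of_norm_lt_one hu)
  have hu2 : normSq u < 1 := by
    rw [← Complex.sq_norm]
    exact (sq_lt_one_iff₀ (norm_nonneg u)).mpr hu
  have hnum : (I * (1 + u)).im * (1 - u).re - (I * (1 + u)).re * (1 - u).im = 1 - normSq u := by
    simp only [mul_im, mul_re, I_re, I_im, add_re, add_im, sub_re, sub_im, one_re, one_im,
      normSq_apply]
    ring
  rw [cayleyInv, div_im, div_sub_div_same, hnum]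
  exact div_pos (by linarith) hnsq

lemma differentiableAt_cayleyInv (hu : ‖u‖ < 1) : DifferentiableAt ℂ cayleyInv u :=
  ((differentiableAt_const I).mul ((differentiableAt_const 1).add differentiableAt_id)).div
    ((differentiableAt_const 1).sub differentiableAt_id) (one_sub_ne_zero_of_norm_lt_one hu)

end Cayley

section Strip

noncomputable def toDisc (z : ℂ) : ℂ := cayley (exp (π * I * z))

noncomputable def toStrip (u : ℂ) : ℂ := log (cayleyInv u) / (π * I)

variable {z u : ℂ}

lemma im_pi_mul_I_mul (z : ℂ) : (π * I * z).im = π * z.re := by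
  simp [mul_im, mul_re]

lemma im_exp_pi_mul_I_mul_pos (hz : 0 < z.re ∧ z.re < 1) : 0 < (exp (π * I * z)).im := by
  rw [exp_im, im_pi_mul_I_mul]
  refine mul_pos (Real.exp_pos _) (Real.sin_pos_of_pos_of_lt_pi ?_ ?_)
  · exact mul_pos Real.pi_pos hz.1
  · nlinarith [Real.pi_pos]

lemma norm_toDisc_lt_one (hz : 0 < z.re ∧ z.re < 1) : ‖toDisc z‖ < 1 :=
  norm_cayley_lt_one (im_exp_pi_mul_I_mul_pos hz)

lemma toStrip_toDisc (hz : 0 < z.re ∧ z.re < 1) : toStrip (toDisc z) = z := by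
  have hne := add_I_ne_zero_of_im_nonneg (im_exp_pi_mul_I_mul_pos hz).le
  rw [toStrip, toDisc, cayleyInv_cayley hne,
    log_exp (by rw [im_pi_mul_I_mul]; nlinarith [Real.pi_pos])
      (by rw [im_pi_mul_I_mul]; nlinarith [Real.pi_pos])]
  field_simp

lemma re_log_div_pi_mul_I (ζ : ℂ) : (log ζ / (π * I)).re = arg ζ / π := by
  rw [div_mul_eq_div_div, div_I, neg_re, mul_re, I_re, I_im, div_ofReal_im, log_im]
  ring

lemma toStrip_mem_strip (hu : ‖u‖ < 1) : 0 < (toStrip u).re ∧ (toStrip u).re < 1 := by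
  have him := im_cayleyInv_pos hu
  rw [toStrip, re_log_div_pi_mul_I]
  constructor
  · refine div_pos ((arg_nonneg_iff.mpr him.le).lt_of_ne fun h ↦ ?_) Real.pi_pos
    linarith [(arg_eq_zero_iff.mp h.symm).2]
  · exact (div_lt_one Real.pi_pos).mpr (arg_lt_pi_iff.mpr (Or.inr him.ne'))

lemma differentiableOn_toStrip : DifferentiableOn ℂ toStrip (ball 0 1) := fun u hu ↦
  have hu1 : ‖u‖ < 1 := mem_ball_zero_iff.mp hu
  (((differentiableAt_log (mem_slitPlane_iff.mpr (Or.inr (im_cayleyInv_pos hu1).ne'))).comp u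
    (differentiableAt_cayleyInv hu1)).div_const _).differentiableWithinAt

lemma two_mul_le_one_sub_norm_toDisc_sq {t : ℝ} (ht0 : 0 ≤ t) (ht1 : t ≤ 1 / 2) :
    2 * t ≤ 1 - ‖toDisc t‖ ^ 2 := by
  set ζ := exp (π * I * t)
  have hζ : ζ = exp ((π * t : ℝ) * I) := by
    show exp (π * I * t) = _
    rw [ofReal_mul, mul_right_comm]
  have him : ζ.im = Real.sin (π * t) := by rw [hζ, exp_ofReal_mul_I_im]
  have hsin : 2 * t ≤ Real.sin (π * t) := by
    have := Real.mul_le_sin (by positivity : 0 ≤ π * t) (by nlinarith [Real.pi_pos])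
    rwa [← mul_assoc, div_mul_cancel₀ _ Real.pi_ne_zero] at this
  have hne : ζ + I ≠ 0 := add_I_ne_zero_of_im_nonneg (by linarith)
  have hnorm : ‖ζ + I‖ ^ 2 ≤ 2 ^ 2 := by
    gcongr
    calc ‖ζ + I‖ ≤ ‖ζ‖ + ‖I‖ := norm_add_le _ _
      _ = 2 := by rw [hζ, norm_exp_ofReal_mul_I, norm_I]; norm_num
  calc 2 * t ≤ 4 * ζ.im / 2 ^ 2 := by rw [him]; linarith
    _ ≤ 4 * ζ.im / ‖ζ + I‖ ^ 2 := by
        gcongr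
        linarith
    _ = 1 - ‖toDisc t‖ ^ 2 := (one_sub_norm_cayley_sq hne).symm

end Strip

lemma inv_natCast_mem_strip {n : ℕ} (hn : 2 ≤ n) : 0 < ((n : ℂ)⁻¹).re ∧ ((n : ℂ)⁻¹).re < 1 := by
  rw [← ofReal_natCast, ← ofReal_inv, ofReal_re]
  have hn' : (1 : ℝ) < n := by exact_mod_cast hn
  exact ⟨by positivity, inv_lt_one_of_one_lt₀ hn'⟩

lemma not_summable_one_sub_norm_toDisc_inv_sq :
    ¬ Summable fun k : ℕ ↦ 1 - ‖toDisc ((k + 2 : ℕ) : ℂ)⁻¹‖ ^ 2 := by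
  intro h
  refine Real.not_summable_natCast_inv ((summable_nat_add_iff 2).mp ?_)
  refine (h.div_const 2).of_nonneg_of_le (fun k ↦ inv_nonneg.mpr (Nat.cast_nonneg _)) fun k ↦ ?_
  have hle : ((k + 2 : ℕ) : ℝ)⁻¹ ≤ 1 / 2 :=
    (inv_anti₀ two_pos (by norm_cast; omega)).trans_eq (one_div 2).symm
  have := two_mul_le_one_sub_norm_toDisc_sq (inv_nonneg.mpr (Nat.cast_nonneg _)) hle
  rw [ofReal_inv, ofReal_natCast] at this
  linarith

/-- Blaschke's theorem on the strip `S = {z : 0 < Re z < 1}`: two holomorphic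
functions on `S` whose difference is bounded and which coincide along the sequence
`1/k`, `k ≥ 2`, are identical on `S`. -/
theorem blaschke_strip (f g : ℂ → ℂ)
    (hf : DifferentiableOn ℂ f {z : ℂ | 0 < z.re ∧ z.re < 1})
    (hg : DifferentiableOn ℂ g {z : ℂ | 0 < z.re ∧ z.re < 1})
    (C : ℝ) (hbd : ∀ z ∈ {z : ℂ | 0 < z.re ∧ z.re < 1}, ‖f z - g z‖ ≤ C)
    (heq : ∀ k : ℕ, 2 ≤ k → f ((k : ℂ))⁻¹ = g ((k : ℂ))⁻¹) :
    EqOn f g {z : ℂ | 0 < z.re ∧ z.re < 1} := by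
  have hmaps : MapsTo toStrip (ball 0 1) {z : ℂ | 0 < z.re ∧ z.re < 1} :=
    fun u hu ↦ toStrip_mem_strip (mem_ball_zero_iff.mp hu)
  have hα (k : ℕ) := inv_natCast_mem_strip (n := k + 2) (by omega)
  have hzero := eqOn_zero_of_not_summable_one_sub_norm_sq
    ((hf.comp differentiableOn_toStrip hmaps).sub (hg.comp differentiableOn_toStrip hmaps))
    (fun w hw ↦ hbd _ (hmaps hw)) (u := fun k ↦ toDisc ((k + 2 : ℕ) : ℂ)⁻¹)
    (fun k ↦ mem_ball_zero_iff.mpr (norm_toDisc_lt_one (hα k)))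
    (Injective.of_comp (f := toStrip) fun j k h ↦ by
      simpa only [comp_apply, toStrip_toDisc (hα _), inv_inj, Nat.cast_inj, add_left_inj] using h)
    (fun k ↦ by
      show f (toStrip _) - g (toStrip _) = 0
      rw [toStrip_toDisc (hα k), heq (k + 2) le_add_self, sub_self])
    not_summable_one_sub_norm_toDisc_inv_sq
  intro z hz
  simpa [toStrip_toDisc hz, sub_eq_zero] using
    hzero (mem_ball_zero_iff.mpr (norm_toDisc_lt_one hz))
end

section
/- Let X_n be nonnegative random variables converging in distribution to X_∞, with λ₀ ∈ D_{X_∞}, λ₀ > 0, and E[X_n^{λ₀}] → E[X_∞^{λ₀}] < ∞. Then for every λ ∈ [0, λ₀], E[X_n^λ] → E[X_∞^λ]. -/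
open MeasureTheory Set Filter
open scoped Topology

/-- Pointwise truncation error bound: for `0 ≤ x`, `0 < M`, `0 ≤ l ≤ l₀`,
`x^l - min (x^l) (M^l) ≤ M^(l-l₀) * x^l₀`. -/
lemma trunc_bound {x M l l₀ : ℝ} (hx : 0 ≤ x) (hM : 0 < M) (hl : 0 ≤ l)
    (hll : l ≤ l₀) : x ^ l - min (x ^ l) (M ^ l) ≤ M ^ (l - l₀) * x ^ l₀ := by
  rcases le_or_gt x M with h | h
  · have : x ^ l ≤ M ^ l := Real.rpow_le_rpow hx h hl
    rw [min_eq_left this]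
    have : (0:ℝ) ≤ M ^ (l - l₀) * x ^ l₀ :=
      mul_nonneg (Real.rpow_nonneg hM.le _) (Real.rpow_nonneg hx _)
    linarith
  · have hx0 : 0 < x := hM.trans h
    have h1 : x ^ l - min (x ^ l) (M ^ l) ≤ x ^ l := by
      have : (0:ℝ) ≤ min (x ^ l) (M ^ l) :=
        le_min (Real.rpow_nonneg hx _) (Real.rpow_nonneg hM.le _)
      linarith
    have h2 : x ^ l = x ^ l₀ * x ^ (l - l₀) := by
      rw [← Real.rpow_add hx0]; ring_nf
    have h3 : x ^ (l - l₀) ≤ M ^ (l - l₀) :=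
      Real.rpow_le_rpow_of_nonpos hM h.le (by linarith)
    calc x ^ l - min (x ^ l) (M ^ l) ≤ x ^ l := h1
      _ = x ^ l₀ * x ^ (l - l₀) := h2
      _ ≤ x ^ l₀ * M ^ (l - l₀) :=
          mul_le_mul_of_nonneg_left h3 (Real.rpow_nonneg hx0.le _)
      _ = M ^ (l - l₀) * x ^ l₀ := mul_comm _ _

/-- If nonnegative `X_n` converge in distribution to `X_∞`, with
`E[X_∞^{λ₀}] < ∞` and `E[X_n^{λ₀}] → E[X_∞^{λ₀}]`, then `E[X_n^λ] → E[X_∞^λ]`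
for every `λ ∈ [0, λ₀]`. -/
theorem moments_tendsto_of_tendsto_moment {Ω : Type*} [MeasurableSpace Ω]
    (P : Measure Ω) [IsProbabilityMeasure P] (X : ℕ → Ω → ℝ) (Xinf : Ω → ℝ)
    (hXm : ∀ n, Measurable (X n)) (hXim : Measurable Xinf)
    (hnn : ∀ n ω, 0 ≤ X n ω) (hinn : ∀ ω, 0 ≤ Xinf ω)
    {l₀ : ℝ} (hl₀ : 0 < l₀)
    (hconv : ∀ F : BoundedContinuousFunction ℝ ℝ,
      Tendsto (fun n => ∫ ω, F (X n ω) ∂P) atTop (𝓝 (∫ ω, F (Xinf ω) ∂P)))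
    (hint : Integrable (fun ω => Xinf ω ^ l₀) P)
    (hintn : ∀ n, Integrable (fun ω => X n ω ^ l₀) P)
    (hmom : Tendsto (fun n => ∫ ω, X n ω ^ l₀ ∂P) atTop
      (𝓝 (∫ ω, Xinf ω ^ l₀ ∂P))) :
    ∀ l : ℝ, 0 ≤ l → l ≤ l₀ →
      Tendsto (fun n => ∫ ω, X n ω ^ l ∂P) atTop (𝓝 (∫ ω, Xinf ω ^ l ∂P)) := by
  intro l hl hll
  -- uniform bound on the l₀-moments
  obtain ⟨C₀, hC₀⟩ : BddAbove (Set.range fun n => ∫ ω, X n ω ^ l₀ ∂P) :=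
    hmom.bddAbove_range
  set C : ℝ := max (max C₀ (∫ ω, Xinf ω ^ l₀ ∂P)) 0 with hCdef
  have hCnn : 0 ≤ C := le_max_right _ _
  have hCn : ∀ n, ∫ ω, X n ω ^ l₀ ∂P ≤ C := fun n =>
    le_trans (hC₀ ⟨n, rfl⟩) (le_trans (le_max_left _ _) (le_max_left _ _))
  have hCi : ∫ ω, Xinf ω ^ l₀ ∂P ≤ C :=
    le_trans (le_max_right C₀ _) (le_max_left _ _)
  -- measurability of the l-th power map
  have hml : Measurable fun x : ℝ => x ^ l :=
    (continuous_id.rpow_const fun x => Or.inr hl).measurable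
  -- integrability of l-th powers
  have hintl : ∀ n, Integrable (fun ω => X n ω ^ l) P := by
    intro n
    refine Integrable.mono' ((integrable_const 1).add (hintn n))
      ((hml.comp (hXm n)).aestronglyMeasurable) (ae_of_all _ fun ω => ?_)
    simp only [Pi.add_apply]
    rw [Real.norm_of_nonneg (Real.rpow_nonneg (hnn n ω) _)]
    rcases le_or_gt (X n ω) 1 with h | h
    · have : X n ω ^ l ≤ 1 := Real.rpow_le_one (hnn n ω) h hl
      have : (0:ℝ) ≤ X n ω ^ l₀ := Real.rpow_nonneg (hnn n ω) _
      linarith [Real.rpow_le_one (hnn n ω) h hl]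
    · have := Real.rpow_le_rpow_of_exponent_le h.le hll
      linarith
  have hintil : Integrable (fun ω => Xinf ω ^ l) P := by
    refine Integrable.mono' ((integrable_const 1).add hint)
      ((hml.comp hXim).aestronglyMeasurable) (ae_of_all _ fun ω => ?_)
    simp only [Pi.add_apply]
    rw [Real.norm_of_nonneg (Real.rpow_nonneg (hinn ω) _)]
    rcases le_or_gt (Xinf ω) 1 with h | h
    · have : (0:ℝ) ≤ Xinf ω ^ l₀ := Real.rpow_nonneg (hinn ω) _
      linarith [Real.rpow_le_one (hinn ω) h hl]
    · have := Real.rpow_le_rpow_of_exponent_le h.le hll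
      linarith
  rw [Metric.tendsto_atTop]
  intro ε hε
  -- choose M with M^(l-l₀) * C small, or handle l = l₀
  rcases eq_or_lt_of_le hll with rfl | hlt
  · exact Metric.tendsto_atTop.1 hmom ε hε
  -- now l < l₀
  have htend : Tendsto (fun M : ℝ => M ^ (l - l₀) * C) atTop (𝓝 0) := by
    have := (tendsto_rpow_neg_atTop (y := l₀ - l) (by linarith)).mul_const C
    simpa [neg_sub] using this
  obtain ⟨M, hM1, hMs⟩ : ∃ M : ℝ, 1 ≤ M ∧ M ^ (l - l₀) * C < ε / 3 := by
    have := (htend.eventually (eventually_lt_nhds (show (0:ℝ) < ε/3 by linarith))).and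
      (eventually_ge_atTop (1:ℝ))
    obtain ⟨M, h1, h2⟩ := this.exists
    exact ⟨M, h2, h1⟩
  have hM : (0:ℝ) < M := lt_of_lt_of_le one_pos hM1
  -- the truncated bounded continuous function
  have hcont : Continuous fun x : ℝ => min (|x| ^ l) (M ^ l) :=
    Continuous.min ((continuous_abs).rpow_const (fun x => Or.inr hl)) continuous_const
  set F : BoundedContinuousFunction ℝ ℝ :=
    BoundedContinuousFunction.ofNormedAddCommGroup _ hcont (M ^ l) (fun x => by
      rw [Real.norm_of_nonneg (le_min (Real.rpow_nonneg (abs_nonneg x) _)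
        (Real.rpow_nonneg hM.le _))]
      exact min_le_right _ _) with hFdef
  have hFeq : ∀ x : ℝ, F x = min (|x| ^ l) (M ^ l) := fun x => rfl
  have hFval : ∀ x : ℝ, 0 ≤ x → F x = min (x ^ l) (M ^ l) := by
    intro x hx
    rw [hFeq, abs_of_nonneg hx]
  have hFbound : ∀ x : ℝ, ‖F x‖ ≤ M ^ l := fun x => by
    rw [hFeq, Real.norm_of_nonneg (le_min (Real.rpow_nonneg (abs_nonneg x) _)
      (Real.rpow_nonneg hM.le _))]
    exact min_le_right _ _
  -- integrability of F ∘ X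
  have hFintn : ∀ n, Integrable (fun ω => F (X n ω)) P := fun n =>
    Integrable.mono' (integrable_const (M ^ l))
      ((F.continuous.measurable.comp (hXm n)).aestronglyMeasurable)
      (ae_of_all _ fun ω => hFbound _)
  have hFinti : Integrable (fun ω => F (Xinf ω)) P :=
    Integrable.mono' (integrable_const (M ^ l))
      ((F.continuous.measurable.comp hXim).aestronglyMeasurable)
      (ae_of_all _ fun ω => hFbound _)
  -- key truncation estimates
  have key : ∀ n, |(∫ ω, X n ω ^ l ∂P) - ∫ ω, F (X n ω) ∂P| ≤ M ^ (l - l₀) * C := by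
    intro n
    rw [← integral_sub (hintl n) (hFintn n)]
    have hptnn : ∀ ω, 0 ≤ X n ω ^ l - F (X n ω) := by
      intro ω
      rw [hFval _ (hnn n ω)]
      have := min_le_left (X n ω ^ l) (M ^ l)
      linarith
    rw [abs_of_nonneg (integral_nonneg hptnn)]
    calc ∫ ω, (X n ω ^ l - F (X n ω)) ∂P
        ≤ ∫ ω, M ^ (l - l₀) * X n ω ^ l₀ ∂P := by
          refine integral_mono ((hintl n).sub (hFintn n)) ((hintn n).const_mul _)
            fun ω => ?_
          rw [hFval _ (hnn n ω)]
          exact trunc_bound (hnn n ω) hM hl hll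
      _ = M ^ (l - l₀) * ∫ ω, X n ω ^ l₀ ∂P := integral_const_mul _ _
      _ ≤ M ^ (l - l₀) * C :=
          mul_le_mul_of_nonneg_left (hCn n) (Real.rpow_nonneg hM.le _)
  have keyi : |(∫ ω, Xinf ω ^ l ∂P) - ∫ ω, F (Xinf ω) ∂P| ≤ M ^ (l - l₀) * C := by
    rw [← integral_sub hintil hFinti]
    have hptnn : ∀ ω, 0 ≤ Xinf ω ^ l - F (Xinf ω) := by
      intro ω
      rw [hFval _ (hinn ω)]
      have := min_le_left (Xinf ω ^ l) (M ^ l)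
      linarith
    rw [abs_of_nonneg (integral_nonneg hptnn)]
    calc ∫ ω, (Xinf ω ^ l - F (Xinf ω)) ∂P
        ≤ ∫ ω, M ^ (l - l₀) * Xinf ω ^ l₀ ∂P := by
          refine integral_mono (hintil.sub hFinti) (hint.const_mul _) fun ω => ?_
          rw [hFval _ (hinn ω)]
          exact trunc_bound (hinn ω) hM hl hll
      _ = M ^ (l - l₀) * ∫ ω, Xinf ω ^ l₀ ∂P := integral_const_mul _ _
      _ ≤ M ^ (l - l₀) * C :=
          mul_le_mul_of_nonneg_left hCi (Real.rpow_nonneg hM.le _)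
  -- combine
  obtain ⟨N, hN⟩ := Metric.tendsto_atTop.1 (hconv F) (ε / 3) (by linarith)
  refine ⟨N, fun n hn => ?_⟩
  have h2 := hN n hn
  rw [Real.dist_eq] at h2 ⊢
  have h1 := key n
  calc |(∫ ω, X n ω ^ l ∂P) - ∫ ω, Xinf ω ^ l ∂P|
      ≤ |(∫ ω, X n ω ^ l ∂P) - ∫ ω, F (X n ω) ∂P|
        + |(∫ ω, F (X n ω) ∂P) - ∫ ω, F (Xinf ω) ∂P|
        + |(∫ ω, F (Xinf ω) ∂P) - ∫ ω, Xinf ω ^ l ∂P| := by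
        have := abs_sub_le (∫ ω, X n ω ^ l ∂P) (∫ ω, F (X n ω) ∂P)
          (∫ ω, Xinf ω ^ l ∂P)
        have := abs_sub_le (∫ ω, F (X n ω) ∂P) (∫ ω, F (Xinf ω) ∂P)
          (∫ ω, Xinf ω ^ l ∂P)
        linarith
    _ < ε / 3 + ε / 3 + ε / 3 := by
        rw [abs_sub_comm (∫ ω, F (Xinf ω) ∂P)]
        have := lt_of_le_of_lt h1 hMs
        have := lt_of_le_of_lt keyi hMs
        linarith
    _ = ε := by ring
end

section
/- Let (X_n) converge in distribution to a non-null nonnegative X_∞, with 0 < λ₀ < min(λ_{X_n}, λ_{X_∞}) for n large, and E[X_n^{λ₀}] → E[X_∞^{λ₀}]. Then for every λ ∈ [0, λ₀], the size-biased variables (X_n)_{(λ)} converge in distribution to (X_∞)_{(λ)}. -/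
/-!
Put `g x = 1 + x₊ ^ λ₀`. Weak convergence together with `∫ g dμₙ → ∫ g dμ∞` upgrades to
convergence of `∫ φ dμₙ` for every continuous `φ` with `|φ| ≤ C g`: writing `φ = f g` with `f`
bounded continuous, replacing `g` by its truncation `min g k` costs at most `C ∫ (g - min g k)`,
which is small uniformly in large `n` because the moments of `g` and of `min g k` both converge.
For `0 ≤ λ ≤ λ₀` both the normaliser `∫ x₊ ^ λ` and the numerator `∫ x₊ ^ λ F` of the size-biased
integral are of this form, and the limiting normaliser is positive since `X_∞` is non-null.
-/

open MeasureTheory Set Filter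
open scoped ENNReal Topology BoundedContinuousFunction

/-- The size-biased law of order `t` of a distribution `μ` on `ℝ`. -/
noncomputable def sizeBiased (μ : MeasureTheory.Measure ℝ) (t : ℝ) :
    MeasureTheory.Measure ℝ :=
  (∫⁻ x, ENNReal.ofReal (x ^ t) ∂μ)⁻¹ •
    μ.withDensity fun x => ENNReal.ofReal (x ^ t)

lemma tendsto_of_forall_exists_tendsto_dist_le {ι α : Type*} [PseudoMetricSpace α]
    {L : Filter ι} {u : ι → α} {x : α}
    (h : ∀ ε > 0, ∃ v : ι → α, ∃ y, Tendsto v L (𝓝 y) ∧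
      (∀ᶠ i in L, dist (u i) (v i) ≤ ε) ∧ dist y x ≤ ε) :
    Tendsto u L (𝓝 x) := by
  refine Metric.tendsto_nhds.2 fun ε hε => ?_
  obtain ⟨v, y, hv, huv, hyx⟩ := h (ε / 3) (by positivity)
  filter_upwards [huv, Metric.tendsto_nhds.1 hv (ε / 3) (by positivity)] with i hi hvi
  calc dist (u i) x ≤ dist (u i) (v i) + dist (v i) y + dist y x := dist_triangle4 _ _ _ _
    _ < ε := by linarith

lemma tendsto_integral_min_natCast {Ω : Type*} [MeasurableSpace Ω] {μ : Measure Ω}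
    {g : Ω → ℝ} (hg : Integrable g μ) (hg0 : 0 ≤ g) :
    Tendsto (fun k : ℕ => ∫ x, min (g x) k ∂μ) atTop (𝓝 (∫ x, g x ∂μ)) := by
  refine tendsto_integral_of_dominated_convergence g (fun k => ?_) hg
    (fun k => ae_of_all _ fun x => ?_) (ae_of_all _ fun x => ?_)
  · exact hg.aestronglyMeasurable.inf aestronglyMeasurable_const
  · rw [Real.norm_of_nonneg (le_min (hg0 x) k.cast_nonneg)]
    exact min_le_left _ _
  · exact tendsto_const_nhds.congr' <|
      (tendsto_natCast_atTop_atTop.eventually_ge_atTop (g x)).mono fun k hk => (min_eq_left hk).symm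

noncomputable def BoundedContinuousFunction.truncate {Ω : Type*} [TopologicalSpace Ω]
    {g : Ω → ℝ} (hgc : Continuous g) (hg0 : 0 ≤ g) (k : ℕ) : Ω →ᵇ ℝ :=
  .ofNormedAddCommGroup (fun x => min (g x) k) (hgc.min continuous_const) k fun x => by
    rw [Real.norm_of_nonneg (le_min (hg0 x) k.cast_nonneg)]
    exact min_le_right _ _

section WeakConvergence

variable {Ω ι : Type*} [TopologicalSpace Ω] [MeasurableSpace Ω] [OpensMeasurableSpace Ω]

lemma abs_integral_mul_sub_integral_mul_le {μ : Measure Ω} (f : Ω →ᵇ ℝ) {g₁ g₂ : Ω → ℝ}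
    (h₁ : Integrable g₁ μ) (h₂ : Integrable g₂ μ) (hle : g₁ ≤ g₂) :
    |∫ x, f x * g₂ x ∂μ - ∫ x, f x * g₁ x ∂μ| ≤ ‖f‖ * (∫ x, g₂ x ∂μ - ∫ x, g₁ x ∂μ) := by
  have hf := f.continuous.aestronglyMeasurable (μ := μ)
  have hb : ∀ᵐ x ∂μ, ‖f x‖ ≤ ‖f‖ := ae_of_all _ f.norm_coe_le_norm
  rw [← integral_sub (h₂.bdd_mul hf hb) (h₁.bdd_mul hf hb), ← integral_sub h₂ h₁,
    ← integral_const_mul, ← Real.norm_eq_abs]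
  refine norm_integral_le_of_norm_le ((h₂.sub h₁).const_mul _) (ae_of_all _ fun x => ?_)
  rw [← mul_sub, norm_mul, Real.norm_of_nonneg (sub_nonneg.2 (hle x))]
  exact mul_le_mul_of_nonneg_right (f.norm_coe_le_norm x) (sub_nonneg.2 (hle x))

variable {L : Filter ι} {ν : ι → Measure Ω} {ν' : Measure Ω} [∀ i, IsFiniteMeasure (ν i)]
  [IsFiniteMeasure ν'] {g : Ω → ℝ}

lemma tendsto_integral_mul_of_tendsto_integral (hgc : Continuous g) (hg0 : 0 ≤ g)
    (hg : Integrable g ν') (hgν : ∀ᶠ i in L, Integrable g (ν i))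
    (hweak : ∀ F : Ω →ᵇ ℝ, Tendsto (fun i => ∫ x, F x ∂(ν i)) L (𝓝 (∫ x, F x ∂ν')))
    (hmom : Tendsto (fun i => ∫ x, g x ∂(ν i)) L (𝓝 (∫ x, g x ∂ν'))) (f : Ω →ᵇ ℝ) :
    Tendsto (fun i => ∫ x, f x * g x ∂(ν i)) L (𝓝 (∫ x, f x * g x ∂ν')) := by
  refine tendsto_of_forall_exists_tendsto_dist_le fun ε hε => ?_
  set G := BoundedContinuousFunction.truncate hgc hg0
  obtain ⟨k, hk⟩ : ∃ k : ℕ, ‖f‖ * (∫ x, g x ∂ν' - ∫ x, G k x ∂ν') < ε := by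
    have h := ((tendsto_integral_min_natCast hg hg0).const_sub (∫ x, g x ∂ν')).const_mul ‖f‖
    rw [sub_self, mul_zero] at h
    exact (h.eventually (gt_mem_nhds hε)).exists
  have hdist : ∀ (ρ : Measure Ω) [IsFiniteMeasure ρ], Integrable g ρ →
      dist (∫ x, f x * g x ∂ρ) (∫ x, (f * G k) x ∂ρ) ≤ ‖f‖ * (∫ x, g x ∂ρ - ∫ x, G k x ∂ρ) :=
    fun ρ _ hρ => abs_integral_mul_sub_integral_mul_le f ((G k).integrable ρ) hρ
      fun x => min_le_left _ _
  refine ⟨fun i => ∫ x, (f * G k) x ∂(ν i), ∫ x, (f * G k) x ∂ν', hweak _, ?_, ?_⟩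
  · have htail := ((hmom.sub (hweak (G k))).const_mul ‖f‖).eventually (eventually_lt_nhds hk)
    filter_upwards [hgν, htail] with i hi hlt
    exact (hdist (ν i) hi).trans hlt.le
  · rw [dist_comm]
    exact (hdist ν' hg).trans hk.le

lemma tendsto_integral_of_abs_le_mul (hgc : Continuous g) (hg_pos : ∀ x, 0 < g x)
    (hg : Integrable g ν') (hgν : ∀ᶠ i in L, Integrable g (ν i))
    (hweak : ∀ F : Ω →ᵇ ℝ, Tendsto (fun i => ∫ x, F x ∂(ν i)) L (𝓝 (∫ x, F x ∂ν')))
    (hmom : Tendsto (fun i => ∫ x, g x ∂(ν i)) L (𝓝 (∫ x, g x ∂ν')))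
    {φ : Ω → ℝ} (hφc : Continuous φ) {C : ℝ} (hφ : ∀ x, |φ x| ≤ C * g x) :
    Tendsto (fun i => ∫ x, φ x ∂(ν i)) L (𝓝 (∫ x, φ x ∂ν')) := by
  let f : Ω →ᵇ ℝ := .ofNormedAddCommGroup (fun x => φ x / g x)
    (hφc.div hgc fun x => (hg_pos x).ne') C fun x => by
      rw [Real.norm_eq_abs, abs_div, abs_of_pos (hg_pos x), div_le_iff₀ (hg_pos x)]
      exact hφ x
  have hfg : ∀ x, f x * g x = φ x := fun x => div_mul_cancel₀ _ (hg_pos x).ne'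
  simpa only [hfg] using
    tendsto_integral_mul_of_tendsto_integral hgc (fun x => (hg_pos x).le) hg hgν hweak hmom f

end WeakConvergence

lemma rpow_le_one_add_rpow {y t s : ℝ} (hy : 0 ≤ y) (ht : 0 ≤ t) (hts : t ≤ s) :
    y ^ t ≤ 1 + y ^ s := by
  rcases le_total y 1 with h | h
  · linarith [Real.rpow_le_one hy h ht, Real.rpow_nonneg hy s]
  · linarith [Real.rpow_le_rpow_of_exponent_le h hts]

/- Moments are taken of `max x 0 ^ t`: it agrees a.e. with `x ^ t` on laws carried by `[0, ∞)`,
but, unlike `Real.rpow` at negative bases, it satisfies `max x 0 ^ t ≤ 1 + max x 0 ^ s`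
everywhere, as the bounded continuous test functions require. -/
lemma measurable_rpow_max_zero (t : ℝ) : Measurable fun x : ℝ => max x 0 ^ t := by
  fun_prop

section Moments

variable {ρ : Measure ℝ}

lemma rpow_max_zero_ae_eq (hρ : ρ {x | x < 0} = 0) (t : ℝ) :
    (fun x => max x 0 ^ t) =ᵐ[ρ] fun x => x ^ t := by
  filter_upwards [measure_eq_zero_iff_ae_notMem.1 hρ] with x hx
  rw [max_eq_left (not_lt.1 hx)]

lemma ofReal_rpow_max_zero_ae_eq (hρ : ρ {x | x < 0} = 0) (t : ℝ) :
    (fun x => ENNReal.ofReal (max x 0 ^ t)) =ᵐ[ρ] fun x => ENNReal.ofReal (x ^ t) :=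
  (rpow_max_zero_ae_eq hρ t).mono fun _ hx => congrArg ENNReal.ofReal hx

lemma integral_rpow_max_zero (hρ : ρ {x | x < 0} = 0) (t : ℝ) :
    ∫ x, max x 0 ^ t ∂ρ = (∫⁻ x, ENNReal.ofReal (x ^ t) ∂ρ).toReal := by
  rw [integral_eq_lintegral_of_nonneg_ae
    (ae_of_all _ fun x => Real.rpow_nonneg (le_max_right x 0) t)
    (measurable_rpow_max_zero t).aestronglyMeasurable]
  exact congrArg _ (lintegral_congr_ae (ofReal_rpow_max_zero_ae_eq hρ t))

lemma MeasureTheory.Integrable.rpow_max_zero_of_le [IsFiniteMeasure ρ] {t s : ℝ} (ht : 0 ≤ t)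
    (hts : t ≤ s) (h : Integrable (fun x => max x 0 ^ s) ρ) :
    Integrable (fun x => max x 0 ^ t) ρ := by
  refine ((integrable_const 1).add h).mono' (measurable_rpow_max_zero t).aestronglyMeasurable
    (ae_of_all _ fun x => ?_)
  rw [Real.norm_of_nonneg (Real.rpow_nonneg (le_max_right x 0) t)]
  exact rpow_le_one_add_rpow (le_max_right x 0) ht hts

lemma integrable_rpow_max_zero_of_lintegral_lt_top [IsFiniteMeasure ρ]
    (hρ : ρ {x | x < 0} = 0) {t s : ℝ} (ht : 0 ≤ t) (hts : t ≤ s)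
    (h : ∫⁻ x, ENNReal.ofReal (x ^ s) ∂ρ < ⊤) : Integrable (fun x => max x 0 ^ t) ρ := by
  refine Integrable.rpow_max_zero_of_le ht hts
    ⟨(measurable_rpow_max_zero s).aestronglyMeasurable, ?_⟩
  rw [hasFiniteIntegral_iff_ofReal (ae_of_all _ fun x => Real.rpow_nonneg (le_max_right x 0) s),
    lintegral_congr_ae (ofReal_rpow_max_zero_ae_eq hρ s)]
  exact h

lemma integral_rpow_max_zero_pos {t : ℝ} (h : Integrable (fun x => max x 0 ^ t) ρ)
    (hpos : ρ (Ioi 0) ≠ 0) : 0 < ∫ x, max x 0 ^ t ∂ρ := by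
  rw [integral_pos_iff_support_of_nonneg (fun x => Real.rpow_nonneg (le_max_right x 0) t) h]
  exact (pos_iff_ne_zero.2 hpos).trans_le <| measure_mono fun x (hx : 0 < x) =>
    (Real.rpow_pos_of_pos (lt_max_of_lt_left hx) t).ne'

lemma integral_sizeBiased (hρ : ρ {x | x < 0} = 0) (t : ℝ) (F : ℝ → ℝ) :
    ∫ x, F x ∂(sizeBiased ρ t) = (∫ x, max x 0 ^ t ∂ρ)⁻¹ * ∫ x, max x 0 ^ t * F x ∂ρ := by
  rw [sizeBiased, integral_smul_measure, integral_withDensity_eq_integral_toReal_smul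
    (by fun_prop) (ae_of_all _ fun _ => ENNReal.ofReal_lt_top), ENNReal.toReal_inv,
    integral_rpow_max_zero hρ, smul_eq_mul]
  refine congrArg _ (integral_congr_ae ?_)
  filter_upwards [rpow_max_zero_ae_eq hρ t] with x hx
  rw [← hx, ENNReal.toReal_ofReal (Real.rpow_nonneg (le_max_right x 0) t), smul_eq_mul]

end Moments

lemma tendsto_integral_rpow_max_zero_mul {ι : Type*} {L : Filter ι} {ν : ι → Measure ℝ}
    {ν' : Measure ℝ} [∀ i, IsProbabilityMeasure (ν i)] [IsProbabilityMeasure ν'] {l l₀ : ℝ}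
    (hl : 0 ≤ l) (hll : l ≤ l₀) (hν' : Integrable (fun x => max x 0 ^ l₀) ν')
    (hν : ∀ᶠ i in L, Integrable (fun x => max x 0 ^ l₀) (ν i))
    (hweak : ∀ F : ℝ →ᵇ ℝ, Tendsto (fun i => ∫ x, F x ∂(ν i)) L (𝓝 (∫ x, F x ∂ν')))
    (hmom : Tendsto (fun i => ∫ x, max x 0 ^ l₀ ∂(ν i)) L (𝓝 (∫ x, max x 0 ^ l₀ ∂ν')))
    (F : ℝ →ᵇ ℝ) :
    Tendsto (fun i => ∫ x, max x 0 ^ l * F x ∂(ν i)) L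
      (𝓝 (∫ x, max x 0 ^ l * F x ∂ν')) := by
  have hl₀ : 0 ≤ l₀ := hl.trans hll
  set g : ℝ → ℝ := fun x => 1 + max x 0 ^ l₀
  have hg_pos (x : ℝ) : 0 < g x := by positivity
  have integral_g (ρ : Measure ℝ) [IsProbabilityMeasure ρ]
      (h : Integrable (fun x => max x 0 ^ l₀) ρ) : ∫ x, g x ∂ρ = 1 + ∫ x, max x 0 ^ l₀ ∂ρ := by
    simp [g, integral_add (integrable_const 1) h]
  have hmom_g : Tendsto (fun i => ∫ x, g x ∂(ν i)) L (𝓝 (∫ x, g x ∂ν')) := by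
    rw [integral_g ν' hν']
    refine (hmom.const_add 1).congr' (hν.mono fun i hi => ?_)
    beta_reduce
    rw [integral_g (ν i) hi]
  refine tendsto_integral_of_abs_le_mul (by fun_prop) hg_pos
    ((integrable_const 1).add hν') (hν.mono fun _ hi => (integrable_const 1).add hi) hweak hmom_g
    (by fun_prop) (C := ‖F‖) fun x => ?_
  rw [abs_mul, abs_of_nonneg (by positivity), mul_comm ‖F‖]
  exact mul_le_mul (rpow_le_one_add_rpow (le_max_right x 0) hl hll)
    ((Real.norm_eq_abs (F x)) ▸ F.norm_coe_le_norm x) (abs_nonneg _) (hg_pos x).le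

theorem sizeBiased_tendsto_of_tendsto_general (μ : ℕ → Measure ℝ) (μinf : Measure ℝ)
    [∀ n, IsProbabilityMeasure (μ n)] [IsProbabilityMeasure μinf]
    (hsupp : ∀ n, μ n {x : ℝ | x < 0} = 0) (hsuppinf : μinf {x : ℝ | x < 0} = 0)
    (hnonnull : μinf (Ioi (0 : ℝ)) ≠ 0)
    {l₀ : ℝ}
    (hdom : ∀ᶠ n in atTop, ∃ l > l₀, ∫⁻ x, ENNReal.ofReal (x ^ l) ∂(μ n) < ⊤)
    (hdominf : ∃ l > l₀, ∫⁻ x, ENNReal.ofReal (x ^ l) ∂μinf < ⊤)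
    (hweak : ∀ F : BoundedContinuousFunction ℝ ℝ,
      Tendsto (fun n => ∫ x, F x ∂(μ n)) atTop (𝓝 (∫ x, F x ∂μinf)))
    (hmom : Tendsto (fun n => (∫⁻ x, ENNReal.ofReal (x ^ l₀) ∂(μ n)).toReal) atTop
      (𝓝 (∫⁻ x, ENNReal.ofReal (x ^ l₀) ∂μinf).toReal)) :
    ∀ l : ℝ, 0 ≤ l → l ≤ l₀ → ∀ F : BoundedContinuousFunction ℝ ℝ,
      Tendsto (fun n => ∫ x, F x ∂(sizeBiased (μ n) l)) atTop
        (𝓝 (∫ x, F x ∂(sizeBiased μinf l))) := by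
  intro l hl hll F
  have hint : ∀ (ρ : Measure ℝ) [IsProbabilityMeasure ρ], ρ {x | x < 0} = 0 →
      (∃ s > l₀, ∫⁻ x, ENNReal.ofReal (x ^ s) ∂ρ < ⊤) → Integrable (fun x => max x 0 ^ l₀) ρ :=
    fun ρ _ hρ ⟨_, hs, h⟩ => integrable_rpow_max_zero_of_lintegral_lt_top hρ (hl.trans hll) hs.le h
  have hμinf := hint μinf hsuppinf hdominf
  simp only [← integral_rpow_max_zero (hsupp _), ← integral_rpow_max_zero hsuppinf] at hmom
  have hconv := tendsto_integral_rpow_max_zero_mul hl hll hμinf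
    (hdom.mono fun n => hint (μ n) (hsupp n)) hweak hmom
  have hnorm := hconv (BoundedContinuousFunction.const ℝ 1)
  simp only [BoundedContinuousFunction.const_apply, mul_one] at hnorm
  have hnorm_pos := integral_rpow_max_zero_pos (hμinf.rpow_max_zero_of_le hl hll) hnonnull
  simp only [integral_sizeBiased (hsupp _), integral_sizeBiased hsuppinf]
  exact (hnorm.inv₀ hnorm_pos.ne').mul (hconv F)

/-- If the laws `μ_n` of nonnegative random variables converge weakly to the law
`μ∞` of a non-null `X_∞`, with `λ₀` strictly below the Mellin abscissas `λ_{X_n}`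
(for `n` large) and `λ_{X_∞}`, and `E[X_n^{λ₀}] → E[X_∞^{λ₀}]`, then for every
`λ ∈ [0, λ₀]` the size-biased laws of order `λ` converge weakly as well. -/
theorem sizeBiased_tendsto_of_tendsto (μ : ℕ → Measure ℝ) (μinf : Measure ℝ)
    [∀ n, IsProbabilityMeasure (μ n)] [IsProbabilityMeasure μinf]
    (hsupp : ∀ n, μ n {x : ℝ | x < 0} = 0) (hsuppinf : μinf {x : ℝ | x < 0} = 0)
    (hnonnull : μinf (Ioi (0 : ℝ)) ≠ 0)
    {l₀ : ℝ} (hl₀ : 0 < l₀)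
    (hdom : ∀ᶠ n in atTop, ∃ l > l₀, ∫⁻ x, ENNReal.ofReal (x ^ l) ∂(μ n) < ⊤)
    (hdominf : ∃ l > l₀, ∫⁻ x, ENNReal.ofReal (x ^ l) ∂μinf < ⊤)
    (hweak : ∀ F : BoundedContinuousFunction ℝ ℝ,
      Tendsto (fun n => ∫ x, F x ∂(μ n)) atTop (𝓝 (∫ x, F x ∂μinf)))
    (hmom : Tendsto (fun n => (∫⁻ x, ENNReal.ofReal (x ^ l₀) ∂(μ n)).toReal) atTop
      (𝓝 (∫⁻ x, ENNReal.ofReal (x ^ l₀) ∂μinf).toReal)) :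
    ∀ l : ℝ, 0 ≤ l → l ≤ l₀ → ∀ F : BoundedContinuousFunction ℝ ℝ,
      Tendsto (fun n => ∫ x, F x ∂(sizeBiased (μ n) l)) atTop
        (𝓝 (∫ x, F x ∂(sizeBiased μinf l))) :=
  sizeBiased_tendsto_of_tendsto_general μ μinf hsupp hsuppinf hnonnull hdom hdominf hweak hmom
end
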